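/- arXiv:1812.03250 — 6 statements merged into one kernel-verified Lean document; each statement's English description precedes it below -/
import Mathlib

section
/- Let G be a k-regular graph. A set S of vertices is a k-conversion set of G (i.e., iteratively adding all vertices with at least k neighbours in the current set eventually yields all of V(G)) if and only if V(G) − S is an independent set. -/
open scoped Classical

noncomputable def convStep {V : Type*} [Fintype V] (G : SimpleGraph V) (k : ℕ)
    (S : Finset V) : Finset V :=
  S ∪ Finset.univ.filter fun v => k ≤ (S.filter fun u => G.Adj v u).card

def IsConversionSet {V : Type*} [Fintype V] (G : SimpleGraph V) (k : ℕ)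
    (S : Finset V) : Prop :=
  ∃ t : ℕ, (convStep G k)^[t] S = Finset.univ

noncomputable def convNum {V : Type*} [Fintype V] (G : SimpleGraph V) (k : ℕ) : ℕ :=
  sInf {n : ℕ | ∃ S : Finset V, IsConversionSet G k S ∧ S.card = n}

def IndepFinset {V : Type*} (G : SimpleGraph V) (S : Finset V) : Prop :=
  ∀ v ∈ S, ∀ w ∈ S, ¬ G.Adj v w

theorem stmt0 {V : Type*} [Fintype V] (k : ℕ) (G : SimpleGraph V)
    (hreg : G.IsRegularOfDegree k) (S : Finset V) :
    IsConversionSet G k S ↔ IndepFinset G (Finset.univ \ S) := by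
  constructor
  · rintro ⟨t, ht⟩
    intro v hv w hw hadj
    simp only [Finset.mem_sdiff, Finset.mem_univ, true_and] at hv hw
    -- invariant: v and w never enter
    have key : ∀ n, v ∉ (convStep G k)^[n] S ∧ w ∉ (convStep G k)^[n] S := by
      intro n
      induction n with
      | zero => exact ⟨hv, hw⟩
      | succ n ih =>
        obtain ⟨ihv, ihw⟩ := ih
        set T := (convStep G k)^[n] S with hT
        rw [Function.iterate_succ_apply']
        have step : ∀ x y, G.Adj x y → y ∉ T → x ∈ convStep G k T → x ∈ T := by
          intro x y hxy hyT hx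
          rcases Finset.mem_union.1 hx with h | h
          · exact h
          · exfalso
            simp only [Finset.mem_filter] at h
            have hsub : T.filter (fun u => G.Adj x u) ⊆
                (G.neighborFinset x).erase y := by
              intro u hu
              simp only [Finset.mem_filter] at hu
              refine Finset.mem_erase.2 ⟨?_, ?_⟩
              · rintro rfl; exact hyT hu.1
              · exact (SimpleGraph.mem_neighborFinset _ _ _).2 hu.2
            have hc : (T.filter (fun u => G.Adj x u)).card ≤ k - 1 := by
              calc (T.filter (fun u => G.Adj x u)).card
                  ≤ ((G.neighborFinset x).erase y).card := Finset.card_le_card hsub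
                _ = (G.neighborFinset x).card - 1 := by
                    rw [Finset.card_erase_of_mem
                      ((SimpleGraph.mem_neighborFinset _ _ _).2 hxy)]
                _ = k - 1 := by rw [SimpleGraph.card_neighborFinset_eq_degree, hreg x]
            have hk1 : 1 ≤ k := by
              have hy : y ∈ G.neighborFinset x :=
                (SimpleGraph.mem_neighborFinset _ _ _).2 hxy
              have h2 : 0 < (G.neighborFinset x).card := Finset.card_pos.2 ⟨y, hy⟩
              rwa [SimpleGraph.card_neighborFinset_eq_degree, hreg x] at h2
            omega
        constructor
        · intro h; exact ihv (step v w hadj ihw h)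
        · intro h; exact ihw (step w v hadj.symm ihv h)
    exact (key t).1 (ht ▸ Finset.mem_univ v)
  · intro hind
    refine ⟨1, ?_⟩
    rw [Function.iterate_one]
    apply Finset.eq_univ_of_forall
    intro v
    by_cases hv : v ∈ S
    · exact Finset.mem_union_left _ hv
    · refine Finset.mem_union_right _ (Finset.mem_filter.2 ⟨Finset.mem_univ _, ?_⟩)
      have hsub : G.neighborFinset v ⊆ S.filter (fun u => G.Adj v u) := by
        intro u hu
        have hadj := (SimpleGraph.mem_neighborFinset _ _ _).1 hu
        refine Finset.mem_filter.2 ⟨?_, hadj⟩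
        by_contra hus
        exact hind v (by simp [hv]) u (by simp [hus]) hadj
      calc k = (G.neighborFinset v).card := by
              rw [SimpleGraph.card_neighborFinset_eq_degree, hreg v]
        _ ≤ _ := Finset.card_le_card hsub
end

section
/- Let G be a (k+1)-regular graph. A set S of vertices is a k-conversion set of G if and only if the induced subgraph G[V − S] is a forest (acyclic). -/
open scoped Classical

/-!
A vertex on a cycle of `G[V - S]` always keeps its two cycle neighbours unconverted, so it sees
at most `k - 1` converted vertices and is never converted. Conversely, if `G[V - A]` is a forest
for the converted set `A`, any leaf of it has at most one unconverted neighbour, hence at least `k`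
converted ones; so every round converts a new vertex until all of `V` is converted.
-/

open Finset SimpleGraph

lemma Finset.iterate_card_eq_univ {V : Type*} [Fintype V] {f : Finset V → Finset V}
    (hf : ∀ A, A ⊆ f A) {S : Finset V} (hS : ∀ A, S ⊆ A → A ≠ univ → A ⊂ f A) :
    f^[Fintype.card V] S = univ := by
  have hsub : ∀ n, S ⊆ f^[n] S := by
    intro n
    induction n with
    | zero => exact subset_rfl
    | succ n ih => exact ih.trans (Function.iterate_succ_apply' f n S ▸ hf _)
  have hgrow : ∀ n, f^[n] S = univ ∨ n ≤ #(f^[n] S) := by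
    intro n
    induction n with
    | zero => exact .inr (Nat.zero_le _)
    | succ n ih =>
      rw [Function.iterate_succ_apply']
      by_cases hn : f^[n] S = univ
      · exact .inl (univ_subset_iff.1 (hn ▸ hf _))
      · have := ih.resolve_left hn
        have := card_lt_card (hS _ (hsub n) hn)
        exact .inr (by omega)
  rcases hgrow (Fintype.card V) with h | h
  · exact h
  · exact eq_univ_of_card _ (le_antisymm (card_le_univ _) h)

namespace SimpleGraph

variable {V : Type*} {G : SimpleGraph V}

lemma Walk.IsCycle.two_le_card_filter_adj [DecidableEq V] {u y : V} {c : G.Walk u u}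
    (hc : c.IsCycle) (hy : y ∈ c.support) : 2 ≤ #{w ∈ c.support.toFinset | G.Adj y w} := by
  set c' := c.rotate y hy
  have hc' : c'.IsCycle := hc.rotate hy
  have hnil : ¬ c'.Nil := hc'.not_nil
  have hsub : ({c'.snd, c'.penultimate} : Finset V) ⊆ {w ∈ c.support.toFinset | G.Adj y w} := by
    intro w hw
    rw [mem_insert, mem_singleton] at hw
    rcases hw with rfl | rfl
    · simpa using
        ⟨(c.mem_support_rotate_iff y hy).1 (c'.getVert_mem_support 1), c'.adj_snd hnil⟩
    · simpa using ⟨(c.mem_support_rotate_iff y hy).1 (c'.getVert_mem_support _),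
        (c'.adj_penultimate hnil).symm⟩
  simpa [card_pair hc'.snd_ne_penultimate] using card_le_card hsub

lemma IsAcyclic.exists_degree_le_one [Fintype V] [Nonempty V] (hG : G.IsAcyclic) :
    ∃ v, G.degree v ≤ 1 := by
  obtain ⟨w⟩ := ‹Nonempty V›
  have : Nonempty (Σ u v : V, G.Path u v) := ⟨⟨w, w, Path.nil⟩⟩
  obtain ⟨⟨u, v, p⟩, hmax⟩ :=
    Finite.exists_max fun p : Σ u v : V, G.Path u v => p.2.2.1.length
  refine ⟨v, ?_⟩
  have hnbr : G.neighborFinset v ⊆ {p.1.penultimate} := by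
    intro w hw
    rw [mem_neighborFinset] at hw
    rw [mem_singleton]
    refine hG.eq_penultimate_of_adj_end p.2 hw ?_
    by_contra hwp
    have := hmax ⟨u, w, ⟨_, p.2.concat hwp hw⟩⟩
    simp at this
  simpa using card_le_card hnbr

lemma exists_card_filter_adj_le_one {A : Finset V} (hA : (G.induce ↑A).IsAcyclic)
    (hne : A.Nonempty) : ∃ v ∈ A, #{u ∈ A | G.Adj v u} ≤ 1 := by
  have : Nonempty (↑A : Set V) := hne.to_subtype
  obtain ⟨⟨v, hv⟩, hdeg⟩ := hA.exists_degree_le_one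
  have hnbr : {u ∈ A | G.Adj v u} =
      ((G.induce ↑A).neighborFinset ⟨v, hv⟩).map (.subtype (· ∈ (↑A : Set V))) := by
    ext u
    simp [and_comm]
  rw [← card_neighborFinset_eq_degree] at hdeg
  exact ⟨v, hv, by rwa [hnbr, card_map]⟩

end SimpleGraph

section Conversion

variable {V : Type*} [Fintype V] {G : SimpleGraph V} {k : ℕ}

lemma mem_convStep {A : Finset V} {v : V} :
    v ∈ convStep G k A ↔ v ∈ A ∨ k ≤ #{u ∈ A | G.Adj v u} := by
  simp [convStep]

lemma subset_convStep (A : Finset V) : A ⊆ convStep G k A := subset_union_left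

lemma card_filter_adj_add_card_filter_adj_compl [DecidableEq V] (A : Finset V) (v : V) :
    #{u ∈ A | G.Adj v u} + #{u ∈ Aᶜ | G.Adj v u} = G.degree v := by
  rw [← card_union_of_disjoint (disjoint_filter_filter disjoint_compl_right), ← filter_union,
    union_compl, ← card_neighborFinset_eq_degree, neighborFinset_eq_filter]

lemma disjoint_convStep [DecidableEq V] (hdeg : ∀ v, G.degree v ≤ k + 1) {A T : Finset V}
    (hT : ∀ v ∈ T, 2 ≤ #{u ∈ T | G.Adj v u}) (hTA : Disjoint T A) :
    Disjoint T (convStep G k A) := by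
  refine disjoint_left.2 fun v hvT hv => ?_
  rcases mem_convStep.1 hv with hvA | hk
  · exact disjoint_left.1 hTA hvT hvA
  · have hTsub : #{u ∈ T | G.Adj v u} ≤ #{u ∈ Aᶜ | G.Adj v u} :=
      card_le_card (filter_subset_filter _ (subset_compl_iff_disjoint_right.2 hTA))
    have := card_filter_adj_add_card_filter_adj_compl (G := G) A v
    have := hT v hvT
    have := hdeg v
    omega

lemma disjoint_iterate_convStep [DecidableEq V] (hdeg : ∀ v, G.degree v ≤ k + 1)
    {A T : Finset V} (hT : ∀ v ∈ T, 2 ≤ #{u ∈ T | G.Adj v u}) (hTA : Disjoint T A)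
    (n : ℕ) :
    Disjoint T ((convStep G k)^[n] A) := by
  induction n with
  | zero => exact hTA
  | succ n ih =>
    rw [Function.iterate_succ_apply']
    exact disjoint_convStep hdeg hT ih

theorem IsConversionSet.isAcyclic_induce_compl [DecidableEq V] (hdeg : ∀ v, G.degree v ≤ k + 1)
    {S : Finset V} (hS : IsConversionSet G k S) : (G.induce ↑Sᶜ).IsAcyclic := by
  intro x c hc
  obtain ⟨t, ht⟩ := hS
  set e := Embedding.induce (G := G) (↑Sᶜ : Set V)
  set f := e.toHom
  have hc' : (c.map f).IsCycle := hc.map e.injective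
  have hdisj : Disjoint (c.map f).support.toFinset S := by
    refine disjoint_left.2 fun v hv hvS => ?_
    rw [List.mem_toFinset, Walk.support_map, List.mem_map] at hv
    obtain ⟨y, -, rfl⟩ := hv
    exact mem_compl.1 (mem_coe.1 y.2) hvS
  have := disjoint_iterate_convStep hdeg
    (fun y hy => hc'.two_le_card_filter_adj (List.mem_toFinset.1 hy)) hdisj t
  rw [ht] at this
  exact disjoint_left.1 this (List.mem_toFinset.2 (c.map f).start_mem_support) (mem_univ _)

lemma ssubset_convStep [DecidableEq V] (hdeg : ∀ v, k + 1 ≤ G.degree v) {A : Finset V}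
    (hA : (G.induce ↑Aᶜ).IsAcyclic) (hne : A ≠ univ) : A ⊂ convStep G k A := by
  obtain ⟨v, hv, hleaf⟩ :=
    exists_card_filter_adj_le_one hA (nonempty_iff_ne_empty.2 (by rwa [Ne, compl_eq_empty_iff]))
  refine (ssubset_iff_of_subset (subset_convStep A)).2
    ⟨v, mem_convStep.2 (.inr ?_), mem_compl.1 hv⟩
  have := card_filter_adj_add_card_filter_adj_compl (G := G) A v
  have := hdeg v
  omega

theorem isConversionSet_of_isAcyclic_induce_compl [DecidableEq V]
    (hdeg : ∀ v, k + 1 ≤ G.degree v) {S : Finset V} (hS : (G.induce ↑Sᶜ).IsAcyclic) :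
    IsConversionSet G k S :=
  ⟨_, Finset.iterate_card_eq_univ subset_convStep fun A hSA hA =>
    ssubset_convStep hdeg (hS.embedding (induceHomOfLE G (by simpa using hSA))) hA⟩

end Conversion

theorem stmt1 {V : Type*} [Fintype V] [DecidableEq V] (k : ℕ) (G : SimpleGraph V)
    (hreg : G.IsRegularOfDegree (k + 1)) (S : Finset V) :
    IsConversionSet G k S ↔ (G.induce ((Sᶜ : Finset V) : Set V)).IsAcyclic :=
  ⟨IsConversionSet.isAcyclic_induce_compl fun v => (hreg v).le,
    isConversionSet_of_isAcyclic_induce_compl fun v => (hreg v).ge⟩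
end

section
/- If G is a (k+1)-regular graph having a k-conversion set of size k, then the order of G is at most 2k + 2. -/
open scoped Classical

theorem stmt5 {V : Type*} [Fintype V] (k : ℕ) (hk : 2 ≤ k) (G : SimpleGraph V)
    (hreg : G.IsRegularOfDegree (k + 1)) (S₀ : Finset V)
    (hconv : IsConversionSet G k S₀) (hcard : S₀.card = k) :
    Fintype.card V ≤ 2 * k + 2 := by
  classical
  obtain ⟨t, ht⟩ := hconv
  set A : ℕ → Finset V := fun s => (convStep G k)^[s] S₀ with hA
  have hAt : ∀ v : V, ∃ s, v ∈ A s := fun v => ⟨t, by simp [hA, ht]⟩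
  set rank : V → ℕ := fun v => Nat.find (hAt v) with hrankdef
  have hrank_mem : ∀ v, v ∈ A (rank v) := fun v => Nat.find_spec (hAt v)
  have hrank_le : ∀ v s, v ∈ A s → rank v ≤ s := fun v s h => Nat.find_le h
  set M : Finset V := Finset.univ \ S₀ with hM
  have hMmem : ∀ v : V, v ∈ M ↔ v ∉ S₀ := by
    intro v; simp [hM]
  by_cases hMn : M.Nonempty
  · have hVne : Nonempty V := ⟨hMn.choose⟩
    set n := Fintype.card V with hn
    have hn1 : 1 ≤ n := Fintype.card_pos
    set idx : V → ℕ := fun v => ((Fintype.equivFin V) v : ℕ) with hidxdef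
    have hidx_lt : ∀ v, idx v < n := fun v => ((Fintype.equivFin V) v).2
    have hidx_inj : Function.Injective idx := fun u v h =>
      (Fintype.equivFin V).injective (Fin.ext h)
    set key : V → ℕ := fun v => rank v * n + idx v with hkeydef
    have hkey_lt : ∀ u v, rank u < rank v → key u < key v := by
      intro u v h
      have h1 := hidx_lt u
      have h2 : rank u + 1 ≤ rank v := h
      calc key u = rank u * n + idx u := rfl
        _ < (rank u + 1) * n := by nlinarith
        _ ≤ rank v * n := Nat.mul_le_mul_right n h2
        _ ≤ rank v * n + idx v := Nat.le_add_right _ _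
    have hkey_inj : Function.Injective key := by
      intro u v h
      rcases lt_trichotomy (rank u) (rank v) with h1 | h1 | h1
      · exact absurd h (Nat.ne_of_lt (hkey_lt u v h1))
      · have h2 : rank u * n + idx u = rank v * n + idx v := h
        rw [h1] at h2
        exact hidx_inj (by omega)
      · exact absurd h.symm (Nat.ne_of_lt (hkey_lt v u h1))
    set Af : V → Finset V := fun v => S₀.filter (fun u => G.Adj v u) with hAf
    set Bf : V → Finset V := fun v => M.filter (fun u => G.Adj v u ∧ key u < key v) with hBf
    set Cf : V → Finset V := fun v => M.filter (fun u => G.Adj v u ∧ key v < key u) with hCf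
    -- every vertex of M has at least k "earlier" neighbours
    have hmain : ∀ v ∈ M, k ≤ (Af v).card + (Bf v).card := by
      intro v hv
      have hv0 : v ∉ S₀ := (hMmem v).1 hv
      have hr1 : 1 ≤ rank v := by
        by_contra h
        have h0 : rank v = 0 := by omega
        have := hrank_mem v
        rw [h0] at this
        simp only [hA, Function.iterate_zero, id_eq] at this
        exact hv0 this
      obtain ⟨s, hs⟩ : ∃ s, rank v = s + 1 := ⟨rank v - 1, by omega⟩
      have hvnot : v ∉ A s := Nat.find_min (hAt v) (show s < rank v by omega)
      have hvmem : v ∈ A (s + 1) := by rw [← hs]; exact hrank_mem v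
      have hstep : A (s + 1) = convStep G k (A s) := by
        simp only [hA, Function.iterate_succ_apply']
      rw [hstep] at hvmem
      unfold convStep at hvmem
      rw [Finset.mem_union] at hvmem
      rcases hvmem with h | h
      · exact absurd h hvnot
      · rw [Finset.mem_filter] at h
        have hkk : k ≤ ((A s).filter (fun u => G.Adj v u)).card := h.2
        have hsub : (A s).filter (fun u => G.Adj v u) ⊆ Af v ∪ Bf v := by
          intro u hu
          rw [Finset.mem_filter] at hu
          by_cases huS : u ∈ S₀
          · exact Finset.mem_union_left _ (Finset.mem_filter.2 ⟨huS, hu.2⟩)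
          · refine Finset.mem_union_right _ (Finset.mem_filter.2 ⟨(hMmem u).2 huS, hu.2, ?_⟩)
            exact hkey_lt u v (hs ▸ Nat.lt_succ_of_le (hrank_le u s hu.1))
        calc k ≤ ((A s).filter (fun u => G.Adj v u)).card := hkk
          _ ≤ (Af v ∪ Bf v).card := Finset.card_le_card hsub
          _ ≤ (Af v).card + (Bf v).card := Finset.card_union_le _ _
    -- the three neighbour sets are disjoint and fit in the neighbourhood
    have hABC : ∀ v ∈ M, (Af v).card + (Bf v).card + (Cf v).card ≤ k + 1 := by
      intro v hv
      have hsub : Af v ∪ Bf v ∪ Cf v ⊆ G.neighborFinset v := by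
        intro u hu
        simp only [Finset.mem_union, hAf, hBf, hCf, Finset.mem_filter] at hu
        rw [SimpleGraph.mem_neighborFinset]
        rcases hu with (⟨_, h⟩ | ⟨_, h, _⟩) | ⟨_, h, _⟩ <;> exact h
      have hd1 : Disjoint (Af v) (Bf v) := by
        rw [Finset.disjoint_left]
        intro u hu1 hu2
        rw [hAf, Finset.mem_filter] at hu1
        rw [hBf, Finset.mem_filter] at hu2
        exact (hMmem u).1 hu2.1 hu1.1
      have hd2 : Disjoint (Af v ∪ Bf v) (Cf v) := by
        rw [Finset.disjoint_left]
        intro u hu1 hu2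
        rw [hCf, Finset.mem_filter] at hu2
        rw [Finset.mem_union] at hu1
        rcases hu1 with h | h
        · rw [hAf, Finset.mem_filter] at h
          exact (hMmem u).1 hu2.1 h.1
        · rw [hBf, Finset.mem_filter] at h
          exact absurd hu2.2.2 (lt_asymm h.2.2)
      calc (Af v).card + (Bf v).card + (Cf v).card
          = (Af v ∪ Bf v).card + (Cf v).card := by
            rw [Finset.card_union_of_disjoint hd1]
        _ = (Af v ∪ Bf v ∪ Cf v).card := (Finset.card_union_of_disjoint hd2).symm
        _ ≤ (G.neighborFinset v).card := Finset.card_le_card hsub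
        _ = k + 1 := hreg v
    have hC1 : ∀ v ∈ M, (Cf v).card ≤ 1 := by
      intro v hv
      have := hmain v hv
      have := hABC v hv
      omega
    obtain ⟨vm, hvmM, hvmax⟩ := Finset.exists_max_image M key hMn
    have hCm : (Cf vm).card = 0 := by
      rw [Finset.card_eq_zero, hCf, Finset.filter_eq_empty_iff]
      intro u hu
      rintro ⟨-, hlt⟩
      exact absurd (hvmax u hu) (by omega)
    have hAm : k + 1 ≤ (Af vm).card + (Bf vm).card := by
      have hsub : G.neighborFinset vm ⊆ Af vm ∪ Bf vm := by
        intro u hu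
        rw [SimpleGraph.mem_neighborFinset] at hu
        by_cases huS : u ∈ S₀
        · exact Finset.mem_union_left _ (Finset.mem_filter.2 ⟨huS, hu⟩)
        · have huM : u ∈ M := (hMmem u).2 huS
          have hne : u ≠ vm := fun h => G.irrefl (h ▸ hu)
          have hle : key u ≤ key vm := hvmax u huM
          have hlt : key u < key vm :=
            lt_of_le_of_ne hle (fun h => hne (hkey_inj h))
          exact Finset.mem_union_right _ (Finset.mem_filter.2 ⟨huM, hu, hlt⟩)
      calc k + 1 = (G.neighborFinset vm).card := (hreg vm).symm
        _ ≤ (Af vm ∪ Bf vm).card := Finset.card_le_card hsub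
        _ ≤ (Af vm).card + (Bf vm).card := Finset.card_union_le _ _
    -- sum of |Af v| over M is at most k(k+1)
    have hsumA : ∑ v ∈ M, (Af v).card ≤ k * (k + 1) := by
      have h1 : ∀ v : V, (Af v).card = ∑ u ∈ S₀, if G.Adj v u then 1 else 0 := by
        intro v; rw [hAf]; rw [Finset.card_filter]
      calc ∑ v ∈ M, (Af v).card
          = ∑ v ∈ M, ∑ u ∈ S₀, if G.Adj v u then 1 else 0 := by
            exact Finset.sum_congr rfl fun v _ => h1 v
        _ = ∑ u ∈ S₀, ∑ v ∈ M, if G.Adj v u then 1 else 0 := Finset.sum_comm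
        _ = ∑ u ∈ S₀, (M.filter (fun v => G.Adj v u)).card := by
            exact Finset.sum_congr rfl fun u _ => (Finset.card_filter _ _).symm
        _ ≤ ∑ u ∈ S₀, (k + 1) := by
            refine Finset.sum_le_sum fun u _ => ?_
            have hsub : M.filter (fun v => G.Adj v u) ⊆ G.neighborFinset u := by
              intro v hv
              rw [Finset.mem_filter] at hv
              rw [SimpleGraph.mem_neighborFinset]
              exact hv.2.symm
            calc (M.filter (fun v => G.Adj v u)).card
                ≤ (G.neighborFinset u).card := Finset.card_le_card hsub
              _ = k + 1 := hreg u
        _ = k * (k + 1) := by rw [Finset.sum_const, hcard, smul_eq_mul]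
    -- sum of |Bf v| equals sum of |Cf v|
    have hBCsym : ∀ x y : V, (G.Adj y x ∧ key x < key y) ↔ (G.Adj x y ∧ key x < key y) := by
      intro x y; rw [G.adj_comm]
    have hBC : ∑ v ∈ M, (Bf v).card = ∑ v ∈ M, (Cf v).card := by
      have hb : ∀ v : V, (Bf v).card
          = ∑ u ∈ M, if G.Adj v u ∧ key u < key v then 1 else 0 := by
        intro v; rw [hBf]; rw [Finset.card_filter]
      have hc : ∀ v : V, (Cf v).card
          = ∑ u ∈ M, if G.Adj v u ∧ key v < key u then 1 else 0 := by
        intro v; rw [hCf]; rw [Finset.card_filter]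
      calc ∑ v ∈ M, (Bf v).card
          = ∑ v ∈ M, ∑ u ∈ M, if G.Adj v u ∧ key u < key v then 1 else 0 :=
            Finset.sum_congr rfl fun v _ => hb v
        _ = ∑ u ∈ M, ∑ v ∈ M, if G.Adj v u ∧ key u < key v then 1 else 0 :=
            Finset.sum_comm
        _ = ∑ v ∈ M, ∑ u ∈ M, if G.Adj v u ∧ key v < key u then 1 else 0 := by
            refine Finset.sum_congr rfl fun x _ => Finset.sum_congr rfl fun y _ => ?_
            exact if_congr (hBCsym x y) rfl rfl
        _ = ∑ v ∈ M, (Cf v).card :=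
            Finset.sum_congr rfl fun v _ => (hc v).symm
    -- sum of |Cf v| is at most |M| - 1
    have hsumC : ∑ v ∈ M, (Cf v).card ≤ M.card - 1 := by
      rw [← Finset.sum_erase_add M _ hvmM, hCm, Nat.add_zero]
      calc ∑ v ∈ M.erase vm, (Cf v).card
          ≤ ∑ v ∈ M.erase vm, 1 :=
            Finset.sum_le_sum fun v hv => hC1 v (Finset.mem_of_mem_erase hv)
        _ = (M.erase vm).card := by rw [Finset.sum_const, smul_eq_mul, mul_one]
        _ = M.card - 1 := Finset.card_erase_of_mem hvmM
    -- lower bound for the sum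
    have hsumAB : k * (M.card - 1) + (k + 1) ≤ ∑ v ∈ M, ((Af v).card + (Bf v).card) := by
      rw [← Finset.sum_erase_add M _ hvmM]
      refine Nat.add_le_add ?_ hAm
      calc k * (M.card - 1) = ∑ _v ∈ M.erase vm, k := by
            rw [Finset.sum_const, Finset.card_erase_of_mem hvmM, smul_eq_mul, mul_comm]
        _ ≤ ∑ v ∈ M.erase vm, ((Af v).card + (Bf v).card) :=
            Finset.sum_le_sum fun v hv => hmain v (Finset.mem_of_mem_erase hv)
    have hsplit : ∑ v ∈ M, ((Af v).card + (Bf v).card)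
        = ∑ v ∈ M, (Af v).card + ∑ v ∈ M, (Bf v).card := Finset.sum_add_distrib
    have hm1 : 1 ≤ M.card := Finset.card_pos.2 hMn
    obtain ⟨m1, hm1eq⟩ : ∃ m1, M.card = m1 + 1 := ⟨M.card - 1, by omega⟩
    have hineq : k * m1 + (k + 1) ≤ k * (k + 1) + m1 := by
      have h1 := hsumAB
      rw [hsplit] at h1
      have h2 : ∑ v ∈ M, (Bf v).card ≤ M.card - 1 := hBC ▸ hsumC
      have h3 : M.card - 1 = m1 := by omega
      rw [hm1eq] at h1
      simp only [Nat.add_sub_cancel] at h1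
      omega
    have hm1le : m1 ≤ k + 1 := by nlinarith
    have hncard : n = k + M.card := by
      have h1 : M.card + S₀.card = (Finset.univ : Finset V).card := by
        rw [hM]; exact Finset.card_sdiff_add_card_eq_card (Finset.subset_univ S₀)
      have h2 : (Finset.univ : Finset V).card = n := by rw [hn]; exact Finset.card_univ
      omega
    omega
  · -- M empty : |V| ≤ k
    rw [Finset.not_nonempty_iff_eq_empty, hM, Finset.sdiff_eq_empty_iff_subset] at hMn
    have : Fintype.card V ≤ S₀.card := by
      rw [← Finset.card_univ]; exact Finset.card_le_card hMn
    omega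
end

section
/- Let G be a (k+r)-regular graph with r ≥ 0. A set S ⊆ V(G) is a k-conversion set of G if and only if the induced subgraph G[V − S] is r-degenerate. -/
open scoped Classical

def Degenerate {V : Type*} (G : SimpleGraph V) (r : ℕ) : Prop :=
  ∀ s : Finset V, s.Nonempty → ∃ v ∈ s, (s.filter fun w => G.Adj v w).card ≤ r

/-!
A vertex outside the converted set `A` of a `(k + r)`-regular graph converts in the next step
exactly when at most `r` of its neighbours lie outside `A`. So if `S` converts everything, then in
any nonempty `s ⊆ Sᶜ` the first vertex to convert has at most `r` neighbours in `s`; conversely, if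
`G[Sᶜ]` is `r`-degenerate, then the unconverted part always contains a vertex that converts next,
so the process cannot stall before reaching all of `V`.
-/

open Finset

namespace SimpleGraph

variable {V : Type*}

theorem degenerate_induce_iff (G : SimpleGraph V) (T : Set V) (r : ℕ) :
    Degenerate (G.induce T) r ↔
      ∀ s : Finset V, ↑s ⊆ T → s.Nonempty → ∃ v ∈ s, #(s.filter (G.Adj v)) ≤ r := by
  have card_map_filter (s : Finset T) (v : T) :
      #((s.map (Function.Embedding.subtype _)).filter (G.Adj v)) =
        #(s.filter fun w => (G.induce T).Adj v w) := by
    rw [filter_map, card_map]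
    rfl
  constructor
  · intro h s hsT hs
    obtain ⟨x, hx⟩ := hs
    obtain ⟨v, hv, hvr⟩ := h (s.subtype (· ∈ T)) ⟨⟨x, hsT hx⟩, mem_subtype.2 hx⟩
    have := card_map_filter (s.subtype (· ∈ T)) v
    rw [subtype_map_of_mem fun x hx => hsT hx] at this
    exact ⟨v, mem_subtype.1 hv, this ▸ hvr⟩
  · intro h s hs
    obtain ⟨v, hv, hvr⟩ := h (s.map (Function.Embedding.subtype _)) (by simp) hs.map
    obtain ⟨v, hvs, rfl⟩ := mem_map.1 hv
    exact ⟨v, hvs, card_map_filter s v ▸ hvr⟩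

variable [Fintype V] {G : SimpleGraph V}

theorem mem_convStep {k : ℕ} {A : Finset V} {v : V} :
    v ∈ convStep G k A ↔ v ∈ A ∨ k ≤ #(A.filter (G.Adj v)) := by
  simp [convStep]

theorem subset_convStep (k : ℕ) (A : Finset V) : A ⊆ convStep G k A :=
  subset_union_left

variable [DecidableEq V]

theorem card_filter_adj_add_card_filter_adj_compl (A : Finset V) (v : V) :
    #(A.filter (G.Adj v)) + #(Aᶜ.filter (G.Adj v)) = G.degree v := by
  rw [← card_union_of_disjoint (disjoint_compl_right.mono (filter_subset _ _) (filter_subset _ _)),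
    ← filter_union, union_compl, ← card_neighborFinset_eq_degree, neighborFinset_eq_filter]

theorem le_card_filter_adj_iff {k r : ℕ} (hreg : G.IsRegularOfDegree (k + r)) (A : Finset V)
    (v : V) : k ≤ #(A.filter (G.Adj v)) ↔ #(Aᶜ.filter (G.Adj v)) ≤ r := by
  have := card_filter_adj_add_card_filter_adj_compl (G := G) A v
  rw [hreg v] at this
  omega

theorem ssubset_convStep_of_degenerate {k r : ℕ} (hreg : G.IsRegularOfDegree (k + r))
    {S A : Finset V} (hdeg : Degenerate (G.induce ((Sᶜ : Finset V) : Set V)) r) (hSA : S ⊆ A)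
    (hA : A ≠ univ) : A ⊂ convStep G k A := by
  obtain ⟨v, hvA, hvr⟩ := (degenerate_induce_iff G _ r).1 hdeg Aᶜ
    (by simpa using compl_subset_compl.2 hSA) (by simpa [nonempty_iff_ne_empty] using hA)
  refine ssubset_iff_of_subset (subset_convStep k A) |>.2 ⟨v, ?_, mem_compl.1 hvA⟩
  exact mem_convStep.2 (.inr ((le_card_filter_adj_iff hreg A v).2 hvr))

theorem card_filter_adj_le_of_mem_convStep {k r : ℕ} (hreg : G.IsRegularOfDegree (k + r))
    {A s : Finset V} (hsA : Disjoint s A) {v : V} (hvs : v ∈ s) (hv : v ∈ convStep G k A) :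
    #(s.filter (G.Adj v)) ≤ r := by
  have hvr := (le_card_filter_adj_iff hreg A v).1
    ((mem_convStep.1 hv).resolve_left (Finset.disjoint_left.1 hsA hvs))
  exact (card_le_card (filter_subset_filter _ (subset_compl_iff_disjoint_right.2 hsA))).trans hvr

end SimpleGraph

theorem Finset.exists_iterate_eq_univ {α : Type*} [Fintype α] [DecidableEq α]
    (f : Finset α → Finset α) {S : Finset α} (hf : ∀ A, S ⊆ A → A ≠ univ → A ⊂ f A)
    (A : Finset α) (hSA : S ⊆ A) : ∃ t, f^[t] A = univ := by
  by_cases hA : A = univ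
  · exact ⟨0, hA⟩
  · obtain ⟨t, ht⟩ := exists_iterate_eq_univ f hf (f A) (hSA.trans (hf A hSA hA).subset)
    exact ⟨t + 1, ht⟩
termination_by #Aᶜ
decreasing_by exact card_lt_card (compl_ssubset_compl.2 (hf A hSA hA))

open SimpleGraph in
theorem stmt9 {V : Type*} [Fintype V] [DecidableEq V] (k r : ℕ) (G : SimpleGraph V)
    (hreg : G.IsRegularOfDegree (k + r)) (S : Finset V) :
    IsConversionSet G k S ↔ Degenerate (G.induce ((Sᶜ : Finset V) : Set V)) r := by
  constructor
  · rintro ⟨t, ht⟩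
    refine (degenerate_induce_iff G _ r).2 fun s hsS ⟨x, hx⟩ => ?_
    -- `m + 1` is the first round in which a vertex of `s` converts.
    obtain ⟨m, hdisj, hmeet⟩ := Nat.exists_not_and_succ_of_not_zero_of_exists
      (p := fun n => ¬ Disjoint s ((convStep G k)^[n] S))
      (not_not.2 (Finset.disjoint_left.2 fun x hx => by simpa using hsS hx))
      ⟨t, not_disjoint_iff.2 ⟨x, hx, ht ▸ mem_univ x⟩⟩
    obtain ⟨v, hvs, hv⟩ := not_disjoint_iff.1 hmeet
    rw [Function.iterate_succ_apply'] at hv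
    exact ⟨v, hvs, card_filter_adj_le_of_mem_convStep hreg (not_not.1 hdisj) hvs hv⟩
  · intro hdeg
    exact exists_iterate_eq_univ (convStep G k)
      (fun A hSA hA => ssubset_convStep_of_degenerate hreg hdeg hSA hA) S subset_rfl
end

section
/- Let A be a cubic graph of order 4r, let a ∈ V(A), and suppose A⁻ = A − a is an induced subgraph of a cubic graph H. Then any 2-conversion set of H contains at least r vertices of A⁻. -/
open scoped Classical

lemma aux_double_count {V : Type*} (G : SimpleGraph V) (X Y : Finset V) :
    ∑ x ∈ X, (Y.filter fun u => G.Adj x u).card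
      = ∑ y ∈ Y, (X.filter fun u => G.Adj y u).card := by
  simp only [Finset.card_filter]
  rw [Finset.sum_comm]
  refine Finset.sum_congr rfl fun y _ => Finset.sum_congr rfl fun x _ => ?_
  rw [G.adj_comm]

lemma aux_minDeg {V : Type*} (G : SimpleGraph V) :
    ∀ X : Finset V, X.Nonempty →
      2 * X.card ≤ ∑ x ∈ X, (X.filter fun u => G.Adj x u).card →
      ∃ Y, Y ⊆ X ∧ Y.Nonempty ∧ ∀ v ∈ Y, 2 ≤ (Y.filter fun u => G.Adj v u).card := by
  intro X
  induction X using Finset.strongInduction with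
  | _ X ih =>
    intro hne hD
    by_cases hall : ∀ v ∈ X, 2 ≤ (X.filter fun u => G.Adj v u).card
    · exact ⟨X, Finset.Subset.refl X, hne, hall⟩
    · push_neg at hall
      obtain ⟨v, hvX, hvdeg⟩ := hall
      have hvdeg' : (X.filter fun u => G.Adj v u).card ≤ 1 := by omega
      set X2 := X.erase v with hX2
      have hsub : X2 ⊂ X := Finset.erase_ssubset hvX
      -- per-term bound
      have hterm : ∀ x ∈ X2, (X.filter fun u => G.Adj x u).card
          ≤ (X2.filter fun u => G.Adj x u).card + (if G.Adj x v then 1 else 0) := by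
        intro x _
        by_cases hadj : G.Adj x v
        · simp only [hadj, if_true]
          have : (X.filter fun u => G.Adj x u) ⊆ insert v (X2.filter fun u => G.Adj x u) := by
            intro u hu
            rw [Finset.mem_filter] at hu
            rcases eq_or_ne u v with rfl | huv
            · exact Finset.mem_insert_self _ _
            · exact Finset.mem_insert_of_mem (Finset.mem_filter.mpr
                ⟨Finset.mem_erase.mpr ⟨huv, hu.1⟩, hu.2⟩)
          calc (X.filter fun u => G.Adj x u).card
              ≤ (insert v (X2.filter fun u => G.Adj x u)).card := Finset.card_le_card this
            _ ≤ (X2.filter fun u => G.Adj x u).card + 1 := Finset.card_insert_le _ _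
        · simp only [hadj, if_false, Nat.add_zero]
          apply Nat.le_of_eq
          congr 1
          ext u
          simp only [Finset.mem_filter, Finset.mem_erase, hX2]
          constructor
          · rintro ⟨hu, ha⟩
            refine ⟨⟨?_, hu⟩, ha⟩
            rintro rfl; exact hadj ha
          · rintro ⟨⟨_, hu⟩, ha⟩; exact ⟨hu, ha⟩
      have hsum2 : ∑ x ∈ X2, (X.filter fun u => G.Adj x u).card
          ≤ (∑ x ∈ X2, (X2.filter fun u => G.Adj x u).card)
            + (X2.filter fun x => G.Adj x v).card := by
        rw [Finset.card_filter]
        rw [← Finset.sum_add_distrib]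
        exact Finset.sum_le_sum hterm
      have hadjv : (X2.filter fun x => G.Adj x v).card ≤ 1 := by
        refine le_trans (Finset.card_le_card ?_) hvdeg'
        intro x hx
        rw [Finset.mem_filter] at hx ⊢
        exact ⟨Finset.mem_of_mem_erase hx.1, (G.adj_comm _ _).mp hx.2⟩
      have hsplit : ∑ x ∈ X, (X.filter fun u => G.Adj x u).card
          = (X.filter fun u => G.Adj v u).card
            + ∑ x ∈ X2, (X.filter fun u => G.Adj x u).card := by
        rw [hX2, ← Finset.sum_erase_add X _ hvX, Nat.add_comm]
      have hcard2 : X2.card = X.card - 1 := Finset.card_erase_of_mem hvX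
      have hXpos : 1 ≤ X.card := Finset.card_pos.mpr hne
      have hD2 : 2 * X2.card ≤ ∑ x ∈ X2, (X2.filter fun u => G.Adj x u).card := by omega
      have hne2 : X2.Nonempty := by
        rw [← Finset.card_pos]
        by_contra h
        push_neg at h
        have h2 : X2 = ∅ := Finset.card_eq_zero.mp (by omega)
        have hc : ∑ x ∈ X2, (X.filter fun u => G.Adj x u).card = 0 := by
          rw [h2]; simp
        omega
      obtain ⟨Y, hYX2, hYne, hYdeg⟩ := ih X2 hsub hne2 hD2
      exact ⟨Y, hYX2.trans (Finset.erase_subset _ _), hYne, hYdeg⟩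

lemma aux_trapped {V : Type*} [Fintype V] (H : SimpleGraph V)
    (hH : H.IsRegularOfDegree 3) (S X : Finset V) (hne : X.Nonempty)
    (hdisj : ∀ v ∈ X, v ∉ S)
    (hdeg : ∀ v ∈ X, 2 ≤ (X.filter fun u => H.Adj v u).card) :
    ¬ IsConversionSet H 2 S := by
  rintro ⟨t, ht⟩
  have hdegv : ∀ v : V, ((Finset.univ : Finset V).filter fun u => H.Adj v u).card = 3 := by
    intro v
    have := hH v
    rw [← this, SimpleGraph.degree]
    congr 1
    ext u
    simp [SimpleGraph.mem_neighborFinset]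
  have key : ∀ n, ∀ v ∈ X, v ∉ (convStep H 2)^[n] S := by
    intro n
    induction n with
    | zero => exact hdisj
    | succ n ihn =>
      intro v hvX hv
      rw [Function.iterate_succ_apply'] at hv
      set W := (convStep H 2)^[n] S with hW
      rw [convStep, Finset.mem_union] at hv
      rcases hv with hv | hv
      · exact ihn v hvX hv
      · rw [Finset.mem_filter] at hv
        have h2W : 2 ≤ (W.filter fun u => H.Adj v u).card := hv.2
        have hdisj2 : Disjoint (W.filter fun u => H.Adj v u) (X.filter fun u => H.Adj v u) := by
          rw [Finset.disjoint_left]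
          intro u huW huX
          rw [Finset.mem_filter] at huW huX
          exact ihn u huX.1 huW.1
        have hsub : (W.filter fun u => H.Adj v u) ∪ (X.filter fun u => H.Adj v u)
            ⊆ (Finset.univ.filter fun u => H.Adj v u) := by
          intro u hu
          simp only [Finset.mem_union, Finset.mem_filter] at hu
          simp only [Finset.mem_filter]
          rcases hu with hu | hu <;> exact ⟨Finset.mem_univ _, hu.2⟩
        have := Finset.card_le_card hsub
        rw [Finset.card_union_of_disjoint hdisj2, hdegv v] at this
        have := hdeg v hvX
        omega
  obtain ⟨v, hv⟩ := hne
  exact key t v hv (ht ▸ Finset.mem_univ v)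

theorem stmt17 {VA VH : Type*} [Fintype VA] [Fintype VH] (r : ℕ)
    (A : SimpleGraph VA) (H : SimpleGraph VH)
    (hA : A.IsRegularOfDegree 3) (hH : H.IsRegularOfDegree 3)
    (hcard : Fintype.card VA = 4 * r) (a : VA)
    (f : {x : VA // x ≠ a} ↪ VH)
    (hind : ∀ x y : {x : VA // x ≠ a}, H.Adj (f x) (f y) ↔ A.Adj ↑x ↑y)
    (S : Finset VH) (hS : IsConversionSet H 2 S) :
    r ≤ (S.filter fun w => ∃ x, f x = w).card := by
  classical
  let A' : SimpleGraph {x : VA // x ≠ a} := SimpleGraph.comap Subtype.val A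
  have hA'filter : ∀ (x : {x : VA // x ≠ a}) (Z : Finset {x : VA // x ≠ a}),
      (Z.filter fun u => A'.Adj x u) = (Z.filter fun u : {x : VA // x ≠ a} => A.Adj ↑x ↑u) := fun x Z => rfl
  have hdegA : ∀ z : VA, ((Finset.univ : Finset VA).filter fun u => A.Adj z u).card = 3 := by
    intro z
    have := hA z
    rw [← this, SimpleGraph.degree]
    congr 1
    ext u
    simp [SimpleGraph.mem_neighborFinset]
  have hmapeq : ∀ p : VA → Prop,
      ((Finset.univ : Finset {x : VA // x ≠ a}).filter fun x : {x : VA // x ≠ a} => p ↑x).card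
        = (((Finset.univ : Finset VA).filter p).erase a).card := by
    intro p
    rw [← Finset.card_map (Function.Embedding.subtype _)]
    congr 1
    ext z
    simp only [Finset.mem_map, Finset.mem_filter, Finset.mem_erase, Finset.mem_univ,
      Function.Embedding.coe_subtype, true_and]
    constructor
    · rintro ⟨⟨y, hy⟩, hpy, rfl⟩
      exact ⟨hy, hpy⟩
    · rintro ⟨hz, hpz⟩
      exact ⟨⟨z, hz⟩, hpz, rfl⟩
  set T' : Finset {x : VA // x ≠ a} := Finset.univ.filter (fun x => f x ∈ S) with hT'
  set X' : Finset {x : VA // x ≠ a} := Finset.univ.filter (fun x => ¬ f x ∈ S) with hX'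
  have hgoal : (S.filter fun w => ∃ x, f x = w) = T'.map f := by
    ext w
    simp only [Finset.mem_filter, Finset.mem_map, hT', Finset.mem_univ, true_and]
    constructor
    · rintro ⟨hw, x, rfl⟩
      exact ⟨x, hw, rfl⟩
    · rintro ⟨x, hx, rfl⟩
      exact ⟨hx, x, rfl⟩
  rw [hgoal, Finset.card_map]
  by_contra hlt
  push_neg at hlt
  have hcVA' : Fintype.card {x : VA // x ≠ a} = 4 * r - 1 := by
    have h1 : Fintype.card {x : VA // ¬ x = a} = Fintype.card VA - Fintype.card {x : VA // x = a} :=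
      Fintype.card_subtype_compl _
    have h2 : Fintype.card {x : VA // x = a} = 1 := Fintype.card_subtype_eq a
    simp only [h2, hcard] at h1
    exact h1
  have hpart : T'.card + X'.card = 4 * r - 1 := by
    rw [hT', hX']
    rw [Finset.card_filter_add_card_filter_not]
    rw [Finset.card_univ, hcVA']
  -- translation between H-side and A'-side neighbourhood counts
  have htrans : ∀ (x : {x : VA // x ≠ a}) (Z : Finset {x : VA // x ≠ a}),
      ((Z.map f).filter fun u => H.Adj (f x) u).card = (Z.filter fun u => A'.Adj x u).card := by
    intro x Z
    rw [← Finset.card_map f]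
    congr 1
    ext w
    simp only [Finset.mem_filter, Finset.mem_map]
    constructor
    · rintro ⟨⟨y, hyZ, rfl⟩, hadj⟩
      exact ⟨y, ⟨hyZ, (hind x y).mp hadj⟩, rfl⟩
    · rintro ⟨y, ⟨hyZ, hadj⟩, rfl⟩
      exact ⟨⟨y, hyZ, rfl⟩, (hind x y).mpr hadj⟩
  have hdeg_lower : ∀ x : {x : VA // x ≠ a},
      3 ≤ ((Finset.univ : Finset {x : VA // x ≠ a}).filter fun u => A'.Adj x u).card
          + (if A.Adj ↑x a then 1 else 0) := by
    intro x
    rw [hA'filter]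
    have h1 := hmapeq (fun u => A.Adj ↑x u)
    rw [h1]
    by_cases hxa : A.Adj ↑x a
    · simp only [hxa, if_true]
      have h2 := Finset.pred_card_le_card_erase
        (s := (Finset.univ : Finset VA).filter fun u => A.Adj ↑x u) (a := a)
      rw [hdegA] at h2
      omega
    · simp only [hxa, if_false, Nat.add_zero]
      rw [Finset.erase_eq_of_notMem, hdegA]
      simp [hxa]
  have hdeg_upper : ∀ x : {x : VA // x ≠ a},
      ((Finset.univ : Finset {x : VA // x ≠ a}).filter fun u => A'.Adj x u).card ≤ 3 := by
    intro x
    rw [hA'filter, hmapeq (fun u => A.Adj ↑x u)]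
    exact le_trans (Finset.card_erase_le) (le_of_eq (hdegA ↑x))
  have hsum_a : ∑ x ∈ X', (if A.Adj ↑x a then 1 else 0) ≤ 3 := by
    calc ∑ x ∈ X', (if A.Adj ↑x a then 1 else 0)
        ≤ ∑ x ∈ (Finset.univ : Finset {x : VA // x ≠ a}), (if A.Adj ↑x a then 1 else 0) :=
          Finset.sum_le_sum_of_subset (Finset.subset_univ _)
      _ = ((Finset.univ : Finset {x : VA // x ≠ a}).filter fun x : {x : VA // x ≠ a} => A.Adj ↑x a).card := by
          rw [Finset.card_filter]
      _ = (((Finset.univ : Finset VA).filter fun z => A.Adj z a).erase a).card :=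
          hmapeq (fun z => A.Adj z a)
      _ ≤ ((Finset.univ : Finset VA).filter fun z => A.Adj z a).card := Finset.card_erase_le
      _ = ((Finset.univ : Finset VA).filter fun u => A.Adj a u).card := by
          congr 1; ext z; simp only [Finset.mem_filter]; rw [A.adj_comm]
      _ = 3 := hdegA a
  have hsum_T : ∑ x ∈ X', (T'.filter fun u => A'.Adj x u).card ≤ 3 * T'.card := by
    calc ∑ x ∈ X', (T'.filter fun u => A'.Adj x u).card
        ≤ ∑ x ∈ (Finset.univ : Finset {x : VA // x ≠ a}),
            (T'.filter fun u => A'.Adj x u).card :=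
          Finset.sum_le_sum_of_subset (Finset.subset_univ _)
      _ = ∑ y ∈ T', ((Finset.univ : Finset {x : VA // x ≠ a}).filter
            fun u => A'.Adj y u).card := aux_double_count A' _ _
      _ ≤ ∑ _y ∈ T', 3 := Finset.sum_le_sum (fun y _ => hdeg_upper y)
      _ = 3 * T'.card := by rw [Finset.sum_const, smul_eq_mul, Nat.mul_comm]
  have hsplitdeg : ∀ x : {x : VA // x ≠ a},
      ((Finset.univ : Finset {x : VA // x ≠ a}).filter fun u => A'.Adj x u).card
        = (X'.filter fun u => A'.Adj x u).card + (T'.filter fun u => A'.Adj x u).card := by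
    intro x
    have h := Finset.card_filter_add_card_filter_not
      (s := (Finset.univ : Finset {x : VA // x ≠ a}).filter fun u => A'.Adj x u)
      (p := fun u => f u ∈ S)
    have e1 : (((Finset.univ : Finset {x : VA // x ≠ a}).filter fun u => A'.Adj x u).filter
        fun u => f u ∈ S) = T'.filter fun u => A'.Adj x u := by
      ext u
      simp only [Finset.mem_filter, hT', Finset.mem_univ, true_and]
      tauto
    have e2 : (((Finset.univ : Finset {x : VA // x ≠ a}).filter fun u => A'.Adj x u).filter
        fun u => ¬ f u ∈ S) = X'.filter fun u => A'.Adj x u := by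
      ext u
      simp only [Finset.mem_filter, hX', Finset.mem_univ, true_and]
      tauto
    rw [e1, e2] at h
    omega
  have hper : ∀ x ∈ X', 3 ≤ (X'.filter fun u => A'.Adj x u).card
      + (T'.filter fun u => A'.Adj x u).card + (if A.Adj ↑x a then 1 else 0) := by
    intro x _
    have h := hdeg_lower x
    rw [hsplitdeg x] at h
    omega
  have hsum3 : 3 * X'.card ≤ (∑ x ∈ X', (X'.filter fun u => A'.Adj x u).card)
      + (∑ x ∈ X', (T'.filter fun u => A'.Adj x u).card)
      + (∑ x ∈ X', (if A.Adj ↑x a then 1 else 0)) := by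
    have := Finset.sum_le_sum hper
    rw [Finset.sum_const, smul_eq_mul, Nat.mul_comm] at this
    calc 3 * X'.card ≤ _ := this
      _ = _ := by rw [Finset.sum_add_distrib, Finset.sum_add_distrib]
  have hDlower : 2 * X'.card ≤ ∑ x ∈ X', (X'.filter fun u => A'.Adj x u).card := by
    omega
  have hX'ne : X'.Nonempty := by
    rw [← Finset.card_pos]
    omega
  obtain ⟨Y, hYX, hYne, hYdeg⟩ := aux_minDeg A' X' hX'ne hDlower
  refine aux_trapped H hH S (Y.map f) hYne.map ?_ ?_ hS
  · intro v hv
    obtain ⟨x, hxY, rfl⟩ := Finset.mem_map.mp hv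
    have := hYX hxY
    rw [hX', Finset.mem_filter] at this
    exact this.2
  · intro v hv
    obtain ⟨x, hxY, rfl⟩ := Finset.mem_map.mp hv
    rw [htrans x Y]
    exact hYdeg x hxY
end

section
/- For any cubic graphs G (of order n ≥ 6) and A (of order 4r), the graph G ∘ A⁻ satisfies c₂(G ∘ A⁻) − ⌈(|V(G ∘ A⁻)| + 2)/4⌉ ≥ ⌊(n − 2)/4⌋, where |V(G ∘ A⁻)| = (4r − 1)n. -/
open scoped Classical

def IsGraphReplacement {V VA W : Type*} (G : SimpleGraph V) (A : SimpleGraph VA)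
    (a : VA) (H : SimpleGraph W) (f : W → V)
    (φ : V → {x : VA // x ≠ a} → W) : Prop :=
  (∀ v x, f (φ v x) = v) ∧
  (∀ v, Function.Injective (φ v)) ∧
  (∀ w : W, ∃ x, φ (f w) x = w) ∧
  (∀ v x y, H.Adj (φ v x) (φ v y) ↔ A.Adj ↑x ↑y) ∧
  (∀ v x (w' : W), f w' ≠ v → H.Adj (φ v x) w' → G.Adj v (f w') ∧ A.Adj ↑x a) ∧
  (∀ u u' : V, G.Adj u u' → ∃! p : W × W, f p.1 = u ∧ f p.2 = u' ∧ H.Adj p.1 p.2)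

section Counting
variable {X : Type*} [Fintype X] (Γ : SimpleGraph X)

noncomputable def ecount (P Q : Finset X) : ℕ :=
  ∑ v ∈ P, ∑ u ∈ Q, if Γ.Adj v u then 1 else 0

lemma ecount_symm (P Q : Finset X) : ecount Γ P Q = ecount Γ Q P := by
  unfold ecount
  rw [Finset.sum_comm]
  exact Finset.sum_congr rfl fun u _ => Finset.sum_congr rfl fun v _ => by
    rw [Γ.adj_comm]

lemma ecount_union_right (P : Finset X) {Q₁ Q₂ : Finset X} (h : Disjoint Q₁ Q₂) :
    ecount Γ P (Q₁ ∪ Q₂) = ecount Γ P Q₁ + ecount Γ P Q₂ := by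
  unfold ecount
  simp_rw [Finset.sum_union h]
  rw [Finset.sum_add_distrib]

lemma ecount_union_left {P₁ P₂ : Finset X} (Q : Finset X) (h : Disjoint P₁ P₂) :
    ecount Γ (P₁ ∪ P₂) Q = ecount Γ P₁ Q + ecount Γ P₂ Q := by
  rw [ecount_symm, ecount_union_right Γ Q h, ecount_symm Γ Q, ecount_symm Γ Q]

lemma inner_sum_eq_card (v : X) (Q : Finset X) :
    (∑ u ∈ Q, if Γ.Adj v u then 1 else 0) = (Q.filter fun u => Γ.Adj v u).card := by
  rw [Finset.card_filter]

lemma inner_sum_univ (hΓ : Γ.IsRegularOfDegree 3) (v : X) :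
    (∑ u ∈ Finset.univ, if Γ.Adj v u then 1 else 0) = 3 := by
  rw [inner_sum_eq_card, ← SimpleGraph.neighborFinset_eq_filter]
  exact hΓ v

lemma ecount_le (hΓ : Γ.IsRegularOfDegree 3) (P Q : Finset X) :
    ecount Γ P Q ≤ 3 * P.card := by
  unfold ecount
  calc ∑ v ∈ P, ∑ u ∈ Q, (if Γ.Adj v u then 1 else 0)
      ≤ ∑ v ∈ P, 3 := by
        refine Finset.sum_le_sum fun v _ => ?_
        rw [← inner_sum_univ Γ hΓ v]
        exact Finset.sum_le_sum_of_subset (Finset.subset_univ Q)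
    _ = 3 * P.card := by rw [Finset.sum_const, smul_eq_mul, mul_comm]

lemma conv_bound_aux (hΓ : Γ.IsRegularOfDegree 3) :
    ∀ (t : ℕ) (T : Finset X), (convStep Γ 2)^[t] T = Finset.univ → T ≠ Finset.univ →
    Fintype.card X + 1 ≤ ecount Γ T Tᶜ + T.card := by
  intro t
  induction t with
  | zero => intro T h h'; exact absurd h h'
  | succ t ih =>
    intro T hT hTne
    rw [Function.iterate_succ_apply] at hT
    set T' := convStep Γ 2 T with hT'def
    have hsub : T ⊆ T' := Finset.subset_union_left
    set C := T' \ T with hCdef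
    have hdisjTC : Disjoint T C := Finset.disjoint_sdiff
    have hTC : T' = T ∪ C := by
      rw [hCdef, Finset.union_sdiff_of_subset hsub]
    have hcompl : Tᶜ = C ∪ T'ᶜ := by
      ext x
      simp only [Finset.mem_compl, Finset.mem_union, Finset.mem_sdiff, hCdef]
      constructor
      · intro hx
        by_cases h : x ∈ T' <;> simp [h, hx]
      · rintro (⟨h1, h2⟩ | h)
        · exact h2
        · exact fun hxT => h (hsub hxT)
    have hdisjC : Disjoint C T'ᶜ := by
      refine Finset.disjoint_left.2 fun x hx hx' => ?_
      exact (Finset.mem_compl.1 hx') (Finset.mem_sdiff.1 hx).1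
    -- every v in C has at least 2 neighbors in T
    have hdeg : ∀ v ∈ C, 2 ≤ (∑ u ∈ T, if Γ.Adj v u then 1 else 0) := by
      intro v hv
      rw [inner_sum_eq_card]
      have := (Finset.mem_sdiff.1 hv)
      have hv1 : v ∈ T' := this.1
      have hv2 : v ∉ T := this.2
      rw [hT'def, convStep, Finset.mem_union] at hv1
      rcases hv1 with h | h
      · exact absurd h hv2
      · exact (Finset.mem_filter.1 h).2
    have hpart : ∀ v : X, (∑ u ∈ T, if Γ.Adj v u then 1 else 0)
        + ((∑ u ∈ C, if Γ.Adj v u then 1 else 0) + (∑ u ∈ T'ᶜ, if Γ.Adj v u then 1 else 0)) = 3 := by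
      intro v
      rw [← Finset.sum_union hdisjC, ← hcompl, Finset.sum_add_sum_compl, inner_sum_univ Γ hΓ]
    have hsplit1 : ecount Γ T Tᶜ = ecount Γ C T + ecount Γ T T'ᶜ := by
      rw [hcompl, ecount_union_right Γ T hdisjC, ecount_symm Γ T C]
    have hsplit2 : ecount Γ T' T'ᶜ = ecount Γ T T'ᶜ + ecount Γ C T'ᶜ := by
      rw [hTC, ecount_union_left Γ _ hdisjTC]
    by_cases hU : T' = Finset.univ
    · -- final step
      have hCeq : C = Tᶜ := by rw [hCdef, hU, Finset.compl_eq_univ_sdiff]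
      have hCne : C.Nonempty := by
        rw [hCeq]
        rw [Finset.nonempty_iff_ne_empty]
        intro h
        exact hTne (by rwa [Finset.compl_eq_empty_iff] at h)
      have : 2 * C.card ≤ ecount Γ C T := by
        rw [ecount]
        calc 2 * C.card = ∑ _v ∈ C, 2 := by rw [Finset.sum_const, smul_eq_mul, mul_comm]
          _ ≤ ∑ v ∈ C, ∑ u ∈ T, (if Γ.Adj v u then 1 else 0) :=
            Finset.sum_le_sum hdeg
      have hcard : Fintype.card X = T.card + C.card := by
        rw [hCeq]
        rw [Finset.card_compl]
        have := Finset.card_le_univ T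
        omega
      have hC1 : 1 ≤ C.card := Finset.card_pos.2 hCne
      have : ecount Γ C T ≤ ecount Γ T Tᶜ := by rw [hsplit1]; omega
      omega
    · have ihT' := ih T' hT hU
      -- per-vertex: e_v + 1 ≤ d_v
      have key : ecount Γ C T'ᶜ + C.card ≤ ecount Γ C T := by
        have hpv : ∀ v ∈ C, (∑ u ∈ T'ᶜ, if Γ.Adj v u then 1 else 0) + 1
            ≤ ∑ u ∈ T, if Γ.Adj v u then 1 else 0 := by
          intro v hv
          have h1 := hpart v
          have h2 := hdeg v hv
          omega
        calc ecount Γ C T'ᶜ + C.card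
            = ∑ v ∈ C, ((∑ u ∈ T'ᶜ, if Γ.Adj v u then 1 else 0) + 1) := by
              rw [Finset.sum_add_distrib, Finset.sum_const, smul_eq_mul, mul_one, ecount]
          _ ≤ ∑ v ∈ C, ∑ u ∈ T, (if Γ.Adj v u then 1 else 0) := Finset.sum_le_sum hpv
          _ = ecount Γ C T := rfl
      have hcard' : T'.card = T.card + C.card := by
        rw [hTC, Finset.card_union_of_disjoint hdisjTC]
      omega

lemma conv_card_bound (hΓ : Γ.IsRegularOfDegree 3) [Nonempty X] (S : Finset X)
    (hS : IsConversionSet Γ 2 S) : Fintype.card X + 1 ≤ 4 * S.card := by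
  by_cases h : S = Finset.univ
  · have : S.card = Fintype.card X := by rw [h, Finset.card_univ]
    have := Fintype.card_pos (α := X)
    omega
  · obtain ⟨t, ht⟩ := hS
    have hb := conv_bound_aux Γ hΓ t S ht h
    have := ecount_le Γ hΓ S Sᶜ
    omega

end Counting

section Mono
variable {X : Type*} [Fintype X] (Γ : SimpleGraph X) (k : ℕ)

lemma subset_convStep_s19 (T : Finset X) : T ⊆ convStep Γ k T := Finset.subset_union_left

lemma subset_iterate (T : Finset X) (i : ℕ) : T ⊆ (convStep Γ k)^[i] T := by
  induction i with
  | zero => exact le_refl T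
  | succ i ih =>
    rw [Function.iterate_succ_apply']
    exact ih.trans (subset_convStep_s19 Γ k _)

end Mono

section Copy
variable {V VA W : Type*} [Fintype V] [Fintype VA] [Fintype W]

lemma copy_conversion (G : SimpleGraph V) (A : SimpleGraph VA)
    (hA : A.IsRegularOfDegree 3) (a : VA) (H : SimpleGraph W)
    (hH : H.IsRegularOfDegree 3) (f : W → V) (φ : V → {x : VA // x ≠ a} → W)
    (hrep : IsGraphReplacement G A a H f φ) (S : Finset W) (v : V) :
    ∀ (i : ℕ) (x : VA),
      (x = a ∨ ∃ h : x ≠ a, φ v ⟨x, h⟩ ∈ (convStep H 2)^[i] S) →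
      x ∈ (convStep A 2)^[i]
        (insert a (Finset.univ.filter fun x => ∃ h : x ≠ a, φ v ⟨x, h⟩ ∈ S)) := by
  obtain ⟨h1, h2, h3, h4, h5, h6⟩ := hrep
  set Sv : Finset VA :=
    insert a (Finset.univ.filter fun x => ∃ h : x ≠ a, φ v ⟨x, h⟩ ∈ S) with hSv
  intro i
  induction i with
  | zero =>
    rintro x (rfl | ⟨h, hx⟩)
    · exact Finset.mem_insert_self _ _
    · exact Finset.mem_insert_of_mem (Finset.mem_filter.2 ⟨Finset.mem_univ x, h, hx⟩)
  | succ i ih =>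
    rintro x (rfl | ⟨hxa, hx⟩)
    · exact subset_iterate A 2 Sv (i + 1) (Finset.mem_insert_self _ _)
    · rw [Function.iterate_succ_apply'] at hx ⊢
      set T := (convStep H 2)^[i] S with hT
      set U := (convStep A 2)^[i] Sv with hU
      set w := φ v ⟨x, hxa⟩ with hw
      rw [convStep, Finset.mem_union] at hx
      rcases hx with hx | hx
      · exact subset_convStep_s19 A 2 U (ih x (Or.inr ⟨hxa, hx⟩))
      · have hd : 2 ≤ (T.filter fun u => H.Adj w u).card := (Finset.mem_filter.1 hx).2
        set D := T.filter (fun u => H.Adj w u) with hD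
        set Din := D.filter (fun u => f u = v) with hDin
        set Dout := D.filter (fun u => ¬ f u = v) with hDout
        have hDcard : Din.card + Dout.card = D.card :=
          Finset.card_filter_add_card_filter_not _
        have hψex : ∀ u ∈ Din, ∃ y : {z : VA // z ≠ a}, φ v y = u := by
          intro u hu
          obtain ⟨y, hy⟩ := h3 u
          have hfu : f u = v := (Finset.mem_filter.1 hu).2
          exact ⟨y, by rwa [hfu] at hy⟩
        set ψ : W → VA := fun u =>
          if hu : ∃ y : {z : VA // z ≠ a}, φ v y = u then ↑(Classical.choose hu) else a
          with hψdef
        have hψspec : ∀ u ∈ Din, ∃ y : {z : VA // z ≠ a},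
            φ v y = u ∧ ψ u = ↑y := by
          intro u hu
          have he := hψex u hu
          refine ⟨Classical.choose he, Classical.choose_spec he, ?_⟩
          simp only [hψdef, dif_pos he]
        have hψmem : ∀ u ∈ Din, ψ u ∈ U.filter (fun z => A.Adj x z) := by
          intro u hu
          obtain ⟨y, hy, hy2⟩ := hψspec u hu
          have huD : u ∈ D := (Finset.mem_filter.1 hu).1
          have huT : u ∈ T := (Finset.mem_filter.1 huD).1
          have hadj : H.Adj w u := (Finset.mem_filter.1 huD).2
          have hAdj : A.Adj x ↑y := by
            rw [← hy] at hadj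
            exact (h4 v ⟨x, hxa⟩ y).1 hadj
          refine Finset.mem_filter.2 ⟨?_, by rwa [hy2]⟩
          rw [hy2]
          refine ih ↑y (Or.inr ⟨y.2, ?_⟩)
          rw [Subtype.coe_eta]
          rwa [hy]
        have hψinj : Set.InjOn ψ ↑Din := by
          intro u1 hu1 u2 hu2 heq
          obtain ⟨y1, hy1, hy1'⟩ := hψspec u1 hu1
          obtain ⟨y2, hy2, hy2'⟩ := hψspec u2 hu2
          rw [hy1', hy2'] at heq
          rw [← hy1, ← hy2, Subtype.ext heq]
        have hψne : ∀ u ∈ Din, ψ u ≠ a := by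
          intro u hu
          obtain ⟨y, _, hy2⟩ := hψspec u hu
          rw [hy2]; exact y.2
        have hDinle : Din.card ≤ (U.filter (fun z => A.Adj x z)).card :=
          Finset.card_le_card_of_injOn ψ hψmem hψinj
        have hDoutle : Dout.card ≤ 1 := by
          by_contra hcon
          push_neg at hcon
          obtain ⟨u1, hu1, u2, hu2, hne⟩ := Finset.one_lt_card.1 hcon
          have hu1D := (Finset.mem_filter.1 hu1).1
          have hu2D := (Finset.mem_filter.1 hu2).1
          have hf1 : f u1 ≠ v := (Finset.mem_filter.1 hu1).2
          have hf2 : f u2 ≠ v := (Finset.mem_filter.1 hu2).2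
          have hadj1 : H.Adj w u1 := (Finset.mem_filter.1 hu1D).2
          have hadj2 : H.Adj w u2 := (Finset.mem_filter.1 hu2D).2
          have hxa' : A.Adj x a := (h5 v ⟨x, hxa⟩ u1 hf1 hadj1).2
          have hdeg3 : (A.neighborFinset x).card = 3 := hA x
          have hNx : ((A.neighborFinset x).erase a).card = 2 := by
            rw [Finset.card_erase_of_mem ((SimpleGraph.mem_neighborFinset _ _ _).2 hxa'), hdeg3]
          obtain ⟨y1, hy1, y2, hy2, hyne⟩ := Finset.one_lt_card.1 (by omega : 1 < ((A.neighborFinset x).erase a).card)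
          have hy1a : y1 ≠ a := (Finset.mem_erase.1 hy1).1
          have hy2a : y2 ≠ a := (Finset.mem_erase.1 hy2).1
          have hy1adj : A.Adj x y1 := (SimpleGraph.mem_neighborFinset _ _ _).1 (Finset.mem_erase.1 hy1).2
          have hy2adj : A.Adj x y2 := (SimpleGraph.mem_neighborFinset _ _ _).1 (Finset.mem_erase.1 hy2).2
          set p1 := φ v ⟨y1, hy1a⟩ with hp1
          set p2 := φ v ⟨y2, hy2a⟩ with hp2
          have hp1adj : H.Adj w p1 := (h4 v ⟨x, hxa⟩ ⟨y1, hy1a⟩).2 hy1adj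
          have hp2adj : H.Adj w p2 := (h4 v ⟨x, hxa⟩ ⟨y2, hy2a⟩).2 hy2adj
          have hp1u1 : p1 ≠ u1 := fun h => hf1 (by rw [← h, h1])
          have hp1u2 : p1 ≠ u2 := fun h => hf2 (by rw [← h, h1])
          have hp2u1 : p2 ≠ u1 := fun h => hf1 (by rw [← h, h1])
          have hp2u2 : p2 ≠ u2 := fun h => hf2 (by rw [← h, h1])
          have hp12 : p1 ≠ p2 := by
            intro h
            have := h2 v h
            exact hyne (congrArg Subtype.val this)
          have hsub4 : ({u1, u2, p1, p2} : Finset W) ⊆ H.neighborFinset w := by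
            intro z hz
            simp only [Finset.mem_insert, Finset.mem_singleton] at hz
            rcases hz with rfl | rfl | rfl | rfl
            · exact (SimpleGraph.mem_neighborFinset _ _ _).2 hadj1
            · exact (SimpleGraph.mem_neighborFinset _ _ _).2 hadj2
            · exact (SimpleGraph.mem_neighborFinset _ _ _).2 hp1adj
            · exact (SimpleGraph.mem_neighborFinset _ _ _).2 hp2adj
          have hcard4 : ({u1, u2, p1, p2} : Finset W).card = 4 := by
            rw [Finset.card_insert_of_notMem (by simp [hne, hp1u1.symm, hp2u1.symm]),
              Finset.card_insert_of_notMem (by simp [hp1u2.symm, hp2u2.symm]),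
              Finset.card_insert_of_notMem (by simp [hp12]),
              Finset.card_singleton]
          have hd3 : (H.neighborFinset w).card = 3 := hH w
          have := Finset.card_le_card hsub4
          rw [hcard4, hd3] at this
          omega
        have hgoal2 : 2 ≤ (U.filter (fun z => A.Adj x z)).card := by
          by_cases hout : Dout.card = 0
          · omega
          · have : Dout.Nonempty := Finset.card_pos.1 (by omega)
            obtain ⟨u0, hu0⟩ := this
            have hadj0 : H.Adj w u0 := (Finset.mem_filter.1 (Finset.mem_filter.1 hu0).1).2
            have hf0 : f u0 ≠ v := (Finset.mem_filter.1 hu0).2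
            have hxa' : A.Adj x a := (h5 v ⟨x, hxa⟩ u0 hf0 hadj0).2
            have hamem : a ∈ U.filter (fun z => A.Adj x z) :=
              Finset.mem_filter.2 ⟨subset_iterate A 2 Sv i (Finset.mem_insert_self a _), hxa'⟩
            have hDin1 : 1 ≤ Din.card := by omega
            obtain ⟨u, hu⟩ := Finset.card_pos.1 hDin1
            exact Finset.one_lt_card.2 ⟨ψ u, hψmem u hu, a, hamem, hψne u hu⟩
        rw [convStep, Finset.mem_union]
        exact Or.inr (Finset.mem_filter.2 ⟨Finset.mem_univ x, hgoal2⟩)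

end Copy

theorem stmt19 {V VA W : Type*} [Fintype V] [Fintype VA] [Fintype W] (n r : ℕ)
    (G : SimpleGraph V) (A : SimpleGraph VA)
    (hG : G.IsRegularOfDegree 3) (hA : A.IsRegularOfDegree 3)
    (hn : Fintype.card V = n) (hn6 : 6 ≤ n) (hr : Fintype.card VA = 4 * r)
    (a : VA) (H : SimpleGraph W) (hH : H.IsRegularOfDegree 3) (f : W → V)
    (φ : V → {x : VA // x ≠ a} → W) (hrep : IsGraphReplacement G A a H f φ) :
    Fintype.card W = (4 * r - 1) * n ∧
      (⌊((n : ℚ) - 2) / 4⌋ : ℤ) ≤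
        (convNum H 2 : ℤ) - ⌈((Fintype.card W : ℚ) + 2) / 4⌉ := by
  obtain ⟨h1, h2, h3, h4, h5, h6⟩ := hrep
  have : Nonempty VA := ⟨a⟩
  have hr1 : 1 ≤ r := by
    have := Fintype.card_pos (α := VA)
    omega
  -- cardinality of W
  have hbij : Function.Bijective (fun p : V × {x : VA // x ≠ a} => φ p.1 p.2) := by
    constructor
    · rintro ⟨v1, x1⟩ ⟨v2, x2⟩ heq
      simp only at heq
      have hv : v1 = v2 := by
        have := h1 v1 x1
        rw [heq, h1 v2 x2] at this
        exact this.symm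
      subst hv
      exact Prod.ext rfl (h2 v1 heq)
    · intro w
      obtain ⟨x, hx⟩ := h3 w
      exact ⟨(f w, x), hx⟩
  have hcardW : Fintype.card W = (4 * r - 1) * n := by
    have := Fintype.card_of_bijective hbij
    rw [Fintype.card_prod] at this
    have hsub : Fintype.card {x : VA // x ≠ a} = 4 * r - 1 := by
      have := Fintype.card_subtype_compl (fun x : VA => x = a)
      rw [Fintype.card_subtype_eq, hr] at this
      exact this
    rw [hsub, hn] at this
    rw [← this, mul_comm]
  refine ⟨hcardW, ?_⟩
  -- get a minimum conversion set
  have hne : ({m : ℕ | ∃ S : Finset W, IsConversionSet H 2 S ∧ S.card = m}).Nonempty :=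
    ⟨Finset.univ.card, Finset.univ, ⟨0, rfl⟩, rfl⟩
  obtain ⟨S, hS, hScard⟩ := Nat.sInf_mem hne
  have hconvS : convNum H 2 = S.card := hScard.symm
  obtain ⟨t, ht⟩ := hS
  -- lower bound on each fiber
  have hfiber : ∀ v : V, r ≤ (S.filter fun w => f w = v).card := by
    intro v
    set Fv : Finset VA := Finset.univ.filter fun x => ∃ h : x ≠ a, φ v ⟨x, h⟩ ∈ S with hFv
    set Sv : Finset VA := insert a Fv with hSvdef
    have hSvconv : IsConversionSet A 2 Sv := by
      refine ⟨t, Finset.eq_univ_iff_forall.2 fun x => ?_⟩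
      by_cases hxa : x = a
      · exact subset_iterate A 2 Sv t (hxa ▸ Finset.mem_insert_self a Fv)
      · refine copy_conversion G A hA a H hH f φ ⟨h1, h2, h3, h4, h5, h6⟩ S v t x
          (Or.inr ⟨hxa, ?_⟩)
        rw [ht]
        exact Finset.mem_univ _
    have hSvlb : Fintype.card VA + 1 ≤ 4 * Sv.card := conv_card_bound A hA Sv hSvconv
    rw [hr] at hSvlb
    -- |Sv| ≤ fiber + 1
    have hWne : Nonempty W := by
      have : 1 < Fintype.card VA := by omega
      obtain ⟨b, hb⟩ := Fintype.exists_ne_of_one_lt_card this a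
      exact ⟨φ v ⟨b, hb⟩⟩
    have hFvle : Fv.card ≤ (S.filter fun w => f w = v).card := by
      refine Finset.card_le_card_of_injOn
        (fun x => if h : x ≠ a then φ v ⟨x, h⟩ else Classical.arbitrary W) ?_ ?_
      · intro x hx
        obtain ⟨hx1, hxne, hxS⟩ := Finset.mem_filter.1 hx
        dsimp only
        rw [dif_pos hxne]
        exact Finset.mem_filter.2 ⟨hxS, h1 v _⟩
      · intro x1 hx1 x2 hx2 heq
        obtain ⟨_, hne1, _⟩ := Finset.mem_filter.1 (by exact hx1)
        obtain ⟨_, hne2, _⟩ := Finset.mem_filter.1 (by exact hx2)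
        dsimp only at heq
        rw [dif_pos hne1, dif_pos hne2] at heq
        have := h2 v heq
        exact congrArg Subtype.val this
    have hSvle : Sv.card ≤ Fv.card + 1 := Finset.card_insert_le a Fv
    omega
  -- total lower bound
  have hSlb : n * r ≤ S.card := by
    have hpart : S.card = ∑ v ∈ Finset.univ, (S.filter fun w => f w = v).card :=
      Finset.card_eq_sum_card_fiberwise fun x _ => Finset.mem_univ (f x)
    calc n * r = ∑ _v ∈ (Finset.univ : Finset V), r := by
          rw [Finset.sum_const, smul_eq_mul, Finset.card_univ, hn]
      _ ≤ ∑ v ∈ Finset.univ, (S.filter fun w => f w = v).card :=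
          Finset.sum_le_sum fun v _ => hfiber v
      _ = S.card := hpart.symm
  -- arithmetic
  have hcN : (n * r : ℤ) ≤ (convNum H 2 : ℤ) := by
    rw [hconvS]
    exact_mod_cast hSlb
  have hceil : ⌈((Fintype.card W : ℚ) + 2) / 4⌉ = (r * n : ℤ) - ⌊((n : ℚ) - 2) / 4⌋ := by
    have hrw : ((Fintype.card W : ℚ) + 2) / 4 = (2 - (n : ℚ)) / 4 + ((r * n : ℤ) : ℚ) := by
      rw [hcardW]
      have h41 : (1 : ℕ) ≤ 4 * r := by omega
      push_cast [Nat.cast_sub h41]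
      ring
    rw [hrw, Int.ceil_add_intCast,
      show (2 - (n : ℚ)) / 4 = -(((n : ℚ) - 2) / 4) by ring, Int.ceil_neg]
    ring
  rw [hceil]
  have : ((n : ℤ) * r) = ((r : ℤ) * n) := by ring
  omega
end
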